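/- arXiv:1703.04508 — 3 statements merged into one kernel-verified Lean document; each statement's English description precedes it below -/
import Mathlib

section
/- Let t ≥ 5 be a natural number and let ν : ℕ → ℤ satisfy ν_j = C(t,j) for 0 ≤ j ≤ 2, ν_{t−1} = ν_t = 0, and the polynomial identity ∑_{j=3}^{t} (C(t,j) − ν_j)·(x−1)^{t−j} = −∑_{j=3}^{t} (−1)^j·(C(t,j) − ν_j)·x^{t−j} in ℤ[x]. Then for every j with 3 ≤ j ≤ t − 2, C(t,j) − ν_j = −∑_{i=3}^{j} (−1)^i · C(t−i, j−i) · (C(t,i) − ν_i). -/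
/-!
Compare the coefficients of `X ^ (t - j)` on the two sides of the polynomial identity. On the
right only the `j`-th term contributes, giving `-(-1) ^ j * d j` with `d i = C(t, i) - ν i`; on
the left, expanding `(X - 1) ^ (t - i)` by the binomial theorem gives
`∑_{i ≤ j} (-1) ^ (j - i) * C(t - i, j - i) * d i`. Multiplying by `(-1) ^ j` yields the recursion.
-/

open Polynomial Finset

variable {R : Type*} [CommRing R]

lemma neg_one_pow_eq_mul_neg_one_pow_sub {i j : ℕ} (h : i ≤ j) :
    (-1 : R) ^ i = (-1) ^ j * (-1) ^ (j - i) := by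
  obtain ⟨k, rfl⟩ := Nat.exists_eq_add_of_le h
  rw [Nat.add_sub_cancel_left, pow_add, mul_assoc, ← pow_add, ← two_mul, pow_mul, neg_one_sq,
    one_pow, mul_one]

lemma coeff_X_sub_one_pow (n k : ℕ) :
    ((X - 1 : R[X]) ^ n).coeff k = (-1) ^ (n - k) * n.choose k := by
  simpa [sub_eq_add_neg] using coeff_X_add_C_pow (-1 : R) n k

lemma coeff_sum_C_mul_X_sub_one_pow (d : ℕ → R) (a : ℕ) {t j : ℕ} (hj : j ≤ t) :
    (∑ i ∈ Icc a t, C (d i) * (X - 1) ^ (t - i)).coeff (t - j)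
      = ∑ i ∈ Icc a j, (-1) ^ (j - i) * ((t - i).choose (j - i) : R) * d i := by
  rw [finsetSum_coeff]
  refine (sum_subset (Icc_subset_Icc_right hj) fun i hi hij => ?_).symm.trans
    (sum_congr rfl fun i hi => ?_)
  · simp only [mem_Icc] at hi hij
    rw [coeff_C_mul, coeff_X_sub_one_pow, Nat.choose_eq_zero_of_lt (by omega)]
    simp
  · have hij : i ≤ j := (mem_Icc.mp hi).2
    have hji : t - i - (t - j) = j - i := by omega
    rw [coeff_C_mul, coeff_X_sub_one_pow, hji, ← Nat.choose_symm (by omega), hji]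
    ring

lemma coeff_sum_neg_one_pow_mul_C_mul_X_pow (d : ℕ → R) {a t j : ℕ} (haj : a ≤ j)
    (hj : j ≤ t) :
    (∑ i ∈ Icc a t, (-1 : R[X]) ^ i * C (d i) * X ^ (t - i)).coeff (t - j) = (-1) ^ j * d j := by
  rw [finsetSum_coeff, sum_eq_single_of_mem j (mem_Icc.mpr ⟨haj, hj⟩) fun i hi hij => ?_]
  · rw [← C_1, ← C_neg, ← C_pow, ← C_mul, coeff_C_mul_X_pow, if_pos rfl]
  · have : t - j ≠ t - i := by simp only [mem_Icc] at hi; omega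
    rw [← C_1, ← C_neg, ← C_pow, ← C_mul, coeff_C_mul_X_pow, if_neg this]

theorem stmt_4_general (t : ℕ) (ν : ℕ → ℤ)
    (hpoly : ∑ j ∈ Finset.Icc 3 t,
        Polynomial.C ((Nat.choose t j : ℤ) - ν j) * (Polynomial.X - 1) ^ (t - j)
      = -∑ j ∈ Finset.Icc 3 t,
        (-1 : Polynomial ℤ) ^ j * Polynomial.C ((Nat.choose t j : ℤ) - ν j) * Polynomial.X ^ (t - j)) :
    ∀ j, 3 ≤ j → j ≤ t - 2 →
      (Nat.choose t j : ℤ) - ν j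
        = -∑ i ∈ Finset.Icc 3 j,
            (-1 : ℤ) ^ i * (Nat.choose (t - i) (j - i) : ℤ) * ((Nat.choose t i : ℤ) - ν i) := by
  intro j hj3 hjt
  have hj : j ≤ t := hjt.trans (Nat.sub_le t 2)
  have key := congrArg (coeff · (t - j)) hpoly
  simp only [coeff_neg, coeff_sum_C_mul_X_sub_one_pow _ _ hj,
    coeff_sum_neg_one_pow_mul_C_mul_X_pow _ hj3 hj] at key
  have hsum : ∑ i ∈ Icc 3 j, (-1 : ℤ) ^ i * ((t - i).choose (j - i) : ℤ) * ((t.choose i : ℤ) - ν i)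
      = (-1) ^ j * ∑ i ∈ Icc 3 j, (-1) ^ (j - i) * ((t - i).choose (j - i) : ℤ)
          * ((t.choose i : ℤ) - ν i) := by
    rw [mul_sum]
    refine sum_congr rfl fun i hi => ?_
    rw [neg_one_pow_eq_mul_neg_one_pow_sub (mem_Icc.mp hi).2]
    ring
  rw [hsum, key, mul_neg, ← mul_assoc, ← pow_add, Even.neg_one_pow ⟨j, rfl⟩, one_mul, neg_neg]

theorem stmt_4 (t : ℕ) (ht : 5 ≤ t) (ν : ℕ → ℤ)
    (hlow : ∀ j ≤ 2, ν j = (Nat.choose t j : ℤ))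
    (h1 : ν (t - 1) = 0) (h2 : ν t = 0)
    (hpoly : ∑ j ∈ Finset.Icc 3 t,
        Polynomial.C ((Nat.choose t j : ℤ) - ν j) * (Polynomial.X - 1) ^ (t - j)
      = -∑ j ∈ Finset.Icc 3 t,
        (-1 : Polynomial ℤ) ^ j * Polynomial.C ((Nat.choose t j : ℤ) - ν j) * Polynomial.X ^ (t - j)) :
    ∀ j, 3 ≤ j → j ≤ t - 2 →
      (Nat.choose t j : ℤ) - ν j
        = -∑ i ∈ Finset.Icc 3 j,
            (-1 : ℤ) ^ i * (Nat.choose (t - i) (j - i) : ℤ) * ((Nat.choose t i : ℤ) - ν i) :=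
  stmt_4_general t ν hpoly
end

section
/- Let t ≥ 5 be a natural number and let ν : ℕ → ℤ satisfy ν_j = C(t,j) for 0 ≤ j ≤ 2, ν_{t−1} = ν_t = 0, and the polynomial identity ∑_{j=3}^{t} (C(t,j) − ν_j)·(x−1)^{t−j} = −∑_{j=3}^{t} (−1)^j·(C(t,j) − ν_j)·x^{t−j} in ℤ[x]. Then ∑_{j=1}^{t−2} (−1)^j · ν_j = 0. -/
/-!
At `x = 1` the left side of the identity collapses to its `j = t` term, `1 - ν t = 1`, while the
right side becomes minus the alternating sum of the defects `C(t,j) - ν j`. Since the binomial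
coefficients have vanishing alternating sum, `∑_{j=0}^{t} (-1)^j ν j = 1`; removing `ν 0 = 1` and
`ν (t-1) = ν t = 0` leaves the claimed identity.
-/

open Finset Polynomial

namespace Polynomial

variable {R : Type*} [CommRing R]

theorem eval_one_sum_C_mul_X_sub_one_pow (d : ℕ → R) {a t : ℕ} (hat : a ≤ t) :
    (∑ j ∈ Icc a t, C (d j) * (X - 1) ^ (t - j)).eval 1 = d t := by
  rw [eval_finsetSum, sum_eq_single_of_mem t (mem_Icc.mpr ⟨hat, le_rfl⟩)]
  · simp
  · intro j hj hjt
    have : t - j ≠ 0 := by have := (mem_Icc.mp hj).2; omega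
    simp [zero_pow this]

theorem alternating_sum_range_eq_neg_of_sum_C_mul_X_sub_one_pow {d : ℕ → R} {a t : ℕ}
    (hat : a ≤ t) (hd : ∀ j < a, d j = 0)
    (h : ∑ j ∈ Icc a t, C (d j) * (X - 1) ^ (t - j)
      = -∑ j ∈ Icc a t, (-1 : R[X]) ^ j * C (d j) * X ^ (t - j)) :
    ∑ j ∈ range (t + 1), (-1) ^ j * d j = -d t := by
  have h1 := congrArg (eval 1) h
  rw [eval_one_sum_C_mul_X_sub_one_pow d hat] at h1
  simp only [eval_neg, eval_finsetSum, eval_mul, eval_pow, eval_one, eval_C,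
    eval_X, one_pow, mul_one] at h1
  rw [h1, neg_neg, range_eq_Ico, ← Ico_union_Ico_eq_Ico (Nat.zero_le a) (by omega),
    sum_union (Ico_disjoint_Ico_consecutive 0 a (t + 1)), Ico_add_one_right_eq_Icc,
    sum_eq_zero fun j hj => by rw [hd j (mem_Ico.mp hj).2, mul_zero], zero_add]

end Polynomial

theorem Finset.sum_range_succ_eq_first_add_sum_Icc_add_last_two {M : Type*} [AddCommMonoid M]
    (f : ℕ → M) {t : ℕ} (ht : 2 ≤ t) :
    ∑ j ∈ range (t + 1), f j = f 0 + ∑ j ∈ Icc 1 (t - 2), f j + f (t - 1) + f t := by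
  obtain ⟨n, rfl⟩ := Nat.exists_eq_add_of_le' ht
  rw [sum_range_succ, sum_range_succ, sum_range_succ', Nat.add_sub_cancel,
    show n + 2 - 1 = n + 1 from rfl, ← Ico_add_one_right_eq_Icc, sum_Ico_eq_sum_range,
    Nat.add_sub_cancel]
  simp only [add_comm 1]
  abel

theorem stmt_5 (t : ℕ) (ht : 5 ≤ t) (ν : ℕ → ℤ)
    (hlow : ∀ j ≤ 2, ν j = (Nat.choose t j : ℤ))
    (h1 : ν (t - 1) = 0) (h2 : ν t = 0)
    (hpoly : ∑ j ∈ Finset.Icc 3 t,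
        Polynomial.C ((Nat.choose t j : ℤ) - ν j) * (Polynomial.X - 1) ^ (t - j)
      = -∑ j ∈ Finset.Icc 3 t,
        (-1 : Polynomial ℤ) ^ j * Polynomial.C ((Nat.choose t j : ℤ) - ν j) * Polynomial.X ^ (t - j)) :
    ∑ j ∈ Finset.Icc 1 (t - 2), (-1 : ℤ) ^ j * ν j = 0 := by
  have hdefect := alternating_sum_range_eq_neg_of_sum_C_mul_X_sub_one_pow (by omega)
    (fun j hj => by rw [hlow j (by omega), sub_self]) hpoly
  have hchoose := Int.alternating_sum_range_choose_of_ne (n := t) (by omega)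
  have heuler : ∑ j ∈ range (t + 1), (-1 : ℤ) ^ j * ν j = 1 := by
    have hsplit : ∑ j ∈ range (t + 1), (-1 : ℤ) ^ j * ν j
        = ∑ j ∈ range (t + 1), (-1 : ℤ) ^ j * t.choose j
          - ∑ j ∈ range (t + 1), (-1 : ℤ) ^ j * (t.choose j - ν j) := by
      rw [← sum_sub_distrib]; exact sum_congr rfl fun j _ => by ring
    rw [hsplit, hchoose, hdefect, h2]; simp
  rw [sum_range_succ_eq_first_add_sum_Icc_add_last_two _ (by omega), h1, h2,
    hlow 0 (by omega)] at heuler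
  simpa using heuler
end

section
/- For any natural number t ≥ 3 and any odd j with 1 ≤ j ≤ t, the number of vertices T of the hypercube {1,−1}^t that can be written as T = ∑_{Q ∈ S} Q (coordinatewise sum of sign vectors) for some j-element subset S of the vertex set V(R) of a fixed symmetric 2t-cycle R in the hypercube graph H(t,2), with S inclusion-minimal with this property, equals 2·C(t,j). -/
/-- The standard symmetric 2t-cycle in the hypercube graph H(t,2):
`stdCycleVertex t k` is the k-th vertex (0 ≤ k < 2t). -/
def stdCycleVertex (t : ℕ) (k : ℕ) : Fin t → ℤ :=
  fun i => if k ≤ t then (if i.val < k then -1 else 1) else (if i.val < k - t then 1 else -1)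

/-- The vertex set V(R) of the standard symmetric 2t-cycle. -/
def stdCycleVertexSet (t : ℕ) : Finset (Fin t → ℤ) :=
  (Finset.range (2 * t)).image (stdCycleVertex t)

/-!
Let `v k` (`k < t`) be the first half of the cycle, so that `V(R) = {± v k}`. A subset `S ⊆ V(R)`
without an antipodal pair `q, -q` amounts to a coefficient vector `ε ∈ {-1, 0, 1}^t`, with
`∑ S = ∑ ε k • v k` and `|S| = #{k | ε k ≠ 0}`; a minimal `S` has no antipodal pair, since removing
one keeps the sum. The twisted difference operator
`δ T = (T 0 + T (t-1), T 1 - T 0, …, T (t-1) - T (t-2))` is injective and sends `∑ ε k • v k` to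
`2 ε`. Hence a sign vector `T` has exactly one antipodal-free representation, given by
`ε = δ T / 2`; it is the unique minimal one, and its size is `#{k | δ T k ≠ 0}`, the number of sign
changes of the antiperiodic extension of `T`. A sign vector is determined by its first entry and
its set of sign changes, which can be any set of odd size: this gives `2 · C(t, j)`.
-/

open Finset

section CycleVertices

variable {t : ℕ}

lemma stdCycleVertex_apply (k i : Fin t) :
    stdCycleVertex t k i = if i < k then -1 else 1 := by
  simp [stdCycleVertex, k.isLt.le]

lemma stdCycleVertex_add {k : ℕ} (hk : k < t) :
    stdCycleVertex t (k + t) = -stdCycleVertex t k := by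
  funext i
  rcases Nat.eq_zero_or_pos k with rfl | hk0
  · simp [stdCycleVertex, i.isLt]
  · simp only [stdCycleVertex, Pi.neg_apply, hk.le, if_true, Nat.add_sub_cancel,
      show ¬k + t ≤ t by omega, if_false]
    split_ifs <;> rfl

lemma stdCycleVertexSet_eq_union :
    stdCycleVertexSet t =
      univ.image (fun k : Fin t => stdCycleVertex t k) ∪
        univ.image (fun k : Fin t => -stdCycleVertex t k) := by
  ext q
  simp only [stdCycleVertexSet, mem_union, mem_image, mem_range, mem_univ, true_and]
  constructor
  · rintro ⟨m, hm, rfl⟩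
    by_cases h : m < t
    · exact Or.inl ⟨⟨m, h⟩, rfl⟩
    · refine Or.inr ⟨⟨m - t, by omega⟩, ?_⟩
      rw [← stdCycleVertex_add (by omega : m - t < t), Nat.sub_add_cancel (by omega)]
  · rintro (⟨k, rfl⟩ | ⟨k, rfl⟩)
    · exact ⟨k, by omega, rfl⟩
    · exact ⟨k + t, by omega, stdCycleVertex_add k.isLt⟩

@[simp]
lemma stdCycleVertex_inj {k l : Fin t} : stdCycleVertex t k = stdCycleVertex t l ↔ k = l := by
  refine ⟨fun h => ?_, fun h => h ▸ rfl⟩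
  have := congrFun h (min k l)
  simp only [stdCycleVertex_apply] at this
  rcases lt_trichotomy k l with hkl | hkl | hkl
  · simp [hkl.le, hkl] at this
  · exact hkl
  · simp [hkl.le, hkl] at this

@[simp]
lemma stdCycleVertex_ne_neg (k l : Fin t) : stdCycleVertex t k ≠ -stdCycleVertex t l := by
  intro h
  have := congrFun h ⟨t - 1, by have := k.isLt; omega⟩
  simp only [stdCycleVertex_apply, Pi.neg_apply, Fin.lt_def,
    show ¬t - 1 < k by omega, show ¬t - 1 < l by omega, if_false] at this
  omega

@[simp]
lemma neg_stdCycleVertex_ne (k l : Fin t) : -stdCycleVertex t k ≠ stdCycleVertex t l :=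
  fun h => stdCycleVertex_ne_neg l k h.symm

end CycleVertices

section AntipodalFree

variable {α : Type*}

def AntipodalFree [Neg α] (S : Finset α) : Prop :=
  ∀ q ∈ S, -q ∉ S

lemma AntipodalFree.mono [Neg α] {S S' : Finset α} (h : AntipodalFree S) (hS' : S' ⊆ S) :
    AntipodalFree S' :=
  fun q hq hnq => h q (hS' hq) (hS' hnq)

lemma AntipodalFree.of_minimal [AddCommGroup α] [IsAddTorsionFree α] [DecidableEq α]
    {S : Finset α} (h : ∀ S' ⊂ S, ∑ q ∈ S', q ≠ ∑ q ∈ S, q) : AntipodalFree S := by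
  intro q hq hnq
  by_cases hself : -q = q
  · have hq0 : q = 0 := self_eq_neg.1 hself.symm
    exact h (S.erase q) (erase_ssubset hq) (by rw [← sum_erase_add S _ hq, hq0, add_zero])
  · refine h ((S.erase q).erase (-q)) ((erase_subset _ _).trans_ssubset (erase_ssubset hq)) ?_
    rw [← sum_erase_add S _ hq, ← sum_erase_add _ _ (mem_erase.2 ⟨hself, hnq⟩),
      neg_add_cancel_right]

end AntipodalFree

section SignedCoefficients

variable {t : ℕ}

lemma sum_of_subset_stdCycleVertexSet {M : Type*} [AddCommMonoid M]
    {S : Finset (Fin t → ℤ)} (hS : S ⊆ stdCycleVertexSet t) (f : (Fin t → ℤ) → M) :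
    ∑ q ∈ S, f q = ∑ k : Fin t,
      ((if stdCycleVertex t k ∈ S then f (stdCycleVertex t k) else 0) +
        (if -stdCycleVertex t k ∈ S then f (-stdCycleVertex t k) else 0)) := by
  have hdisj : Disjoint (univ.image fun k : Fin t => stdCycleVertex t k)
      (univ.image fun k : Fin t => -stdCycleVertex t k) := by
    simp [disjoint_left]
  calc ∑ q ∈ S, f q = ∑ q ∈ stdCycleVertexSet t, if q ∈ S then f q else 0 := by
        rw [sum_ite_mem, inter_eq_right.2 hS]
    _ = _ := by
        rw [stdCycleVertexSet_eq_union, sum_union hdisj,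
          sum_image fun k _ l _ h => stdCycleVertex_inj.1 h,
          sum_image fun k _ l _ h => stdCycleVertex_inj.1 (neg_inj.1 h), sum_add_distrib]

def signedCoeff (S : Finset (Fin t → ℤ)) (k : Fin t) : ℤ :=
  (if stdCycleVertex t k ∈ S then 1 else 0) - (if -stdCycleVertex t k ∈ S then 1 else 0)

lemma sum_eq_sum_signedCoeff_smul {S : Finset (Fin t → ℤ)} (hS : S ⊆ stdCycleVertexSet t) :
    ∑ q ∈ S, q = ∑ k, signedCoeff S k • stdCycleVertex t k := by
  refine (sum_of_subset_stdCycleVertexSet hS id).trans (sum_congr rfl fun k _ => ?_)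
  unfold signedCoeff
  split_ifs <;> simp

lemma card_eq_card_signedCoeff_ne_zero {S : Finset (Fin t → ℤ)} (hS : S ⊆ stdCycleVertexSet t)
    (hfree : AntipodalFree S) : #S = #{k | signedCoeff S k ≠ 0} := by
  rw [card_eq_sum_ones, sum_of_subset_stdCycleVertexSet hS, card_filter]
  refine sum_congr rfl fun k _ => ?_
  have := hfree (stdCycleVertex t k)
  unfold signedCoeff
  split_ifs <;> simp_all

lemma exists_signedCoeff_eq {ε : Fin t → ℤ} (hε : ∀ k, ε k = 0 ∨ ε k = 1 ∨ ε k = -1) :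
    ∃ S ⊆ stdCycleVertexSet t, AntipodalFree S ∧ signedCoeff S = ε := by
  refine ⟨({k | ε k = 1} : Finset (Fin t)).image (fun k : Fin t => stdCycleVertex t k) ∪
    ({k | ε k = -1} : Finset (Fin t)).image (fun k : Fin t => -stdCycleVertex t k), ?_, ?_, ?_⟩
  · rw [stdCycleVertexSet_eq_union]
    exact union_subset_union (image_subset_image (filter_subset _ _))
      (image_subset_image (filter_subset _ _))
  · intro q hq hnq
    simp only [mem_union, mem_image, mem_filter, mem_univ, true_and] at hq hnq
    rcases hq with ⟨k, hk, rfl⟩ | ⟨k, hk, rfl⟩ <;>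
      rcases hnq with ⟨l, hl, h⟩ | ⟨l, hl, h⟩
    all_goals simp_all
  · funext k
    simp only [signedCoeff, mem_union, mem_image, mem_filter, mem_univ, true_and]
    rcases hε k with h | h | h <;> simp [h]

end SignedCoefficients

section TwistedDifference

variable {n : ℕ}

/-- The difference operator of the antiperiodic extension `T (i + n + 1) = -T i` of `T`. -/
def twistedDiff (T : Fin (n + 1) → ℤ) : Fin (n + 1) → ℤ :=
  Fin.cons (T 0 + T (Fin.last n)) fun i => T i.succ - T i.castSucc

-- Together with the next lemma: `twistedDiff (stdCycleVertex (n + 1) k) = Pi.single k 2`.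
lemma stdCycleVertex_apply_zero_add_last (k : Fin (n + 1)) :
    stdCycleVertex (n + 1) k 0 + stdCycleVertex (n + 1) k (Fin.last n) =
      if k = 0 then 2 else 0 := by
  simp only [stdCycleVertex_apply, Fin.pos_iff_ne_zero', not_lt.2 k.le_last, if_false]
  split_ifs <;> simp_all

lemma stdCycleVertex_apply_succ_sub_castSucc (k : Fin (n + 1)) (i : Fin n) :
    stdCycleVertex (n + 1) k i.succ - stdCycleVertex (n + 1) k i.castSucc =
      if k = i.succ then 2 else 0 := by
  simp only [stdCycleVertex_apply, Fin.lt_def, Fin.ext_iff, Fin.val_succ, Fin.val_castSucc]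
  split_ifs <;> omega

lemma twistedDiff_sum_smul (ε : Fin (n + 1) → ℤ) :
    twistedDiff (∑ k, ε k • stdCycleVertex (n + 1) k) = 2 • ε := by
  funext i
  induction i using Fin.cases with
  | zero =>
    rw [twistedDiff, Fin.cons_zero, Finset.sum_apply, Finset.sum_apply, ← sum_add_distrib]
    simp only [Pi.smul_apply, smul_eq_mul, ← mul_add, stdCycleVertex_apply_zero_add_last,
      mul_ite, mul_zero, sum_ite_eq', mem_univ, if_true]
    rw [mul_two, two_nsmul]
  | succ i =>
    rw [twistedDiff, Fin.cons_succ, Finset.sum_apply, Finset.sum_apply, ← sum_sub_distrib]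
    simp only [Pi.smul_apply, smul_eq_mul, ← mul_sub, stdCycleVertex_apply_succ_sub_castSucc,
      mul_ite, mul_zero, sum_ite_eq', mem_univ, if_true]
    rw [mul_two, two_nsmul]

lemma twistedDiff_injective : Function.Injective (twistedDiff (n := n)) := by
  intro T U h
  have h0 : T 0 + T (Fin.last n) = U 0 + U (Fin.last n) := by
    simpa [twistedDiff] using congrFun h 0
  have hsucc (i : Fin n) : T i.succ - T i.castSucc = U i.succ - U i.castSucc := by
    simpa [twistedDiff] using congrFun h i.succ
  have hconst (i : Fin (n + 1)) : T i - U i = T 0 - U 0 := by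
    induction i using Fin.induction with
    | zero => rfl
    | succ i ih => linarith [hsucc i]
  have hzero : T 0 = U 0 := by linarith [hconst (Fin.last n)]
  funext i
  linarith [hconst i]

lemma sum_smul_stdCycleVertex_eq_iff {ε T : Fin (n + 1) → ℤ} :
    ∑ k, ε k • stdCycleVertex (n + 1) k = T ↔ twistedDiff T = 2 • ε :=
  ⟨fun h => h ▸ twistedDiff_sum_smul ε,
    fun h => twistedDiff_injective (by rw [twistedDiff_sum_smul, h])⟩

end TwistedDifference

section MinimalRepresentations

variable {n : ℕ}

def signChanges (T : Fin (n + 1) → ℤ) : Finset (Fin (n + 1)) :=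
  {k | twistedDiff T k ≠ 0}

lemma zero_mem_signChanges {T : Fin (n + 1) → ℤ} :
    0 ∈ signChanges T ↔ T 0 + T (Fin.last n) ≠ 0 := by
  rw [signChanges, mem_filter]
  simp [twistedDiff]

lemma succ_mem_signChanges {T : Fin (n + 1) → ℤ} {i : Fin n} :
    i.succ ∈ signChanges T ↔ T i.succ ≠ T i.castSucc := by
  rw [signChanges, mem_filter]
  simp [twistedDiff, sub_eq_zero]

lemma card_eq_card_signChanges_sum {S : Finset (Fin (n + 1) → ℤ)}
    (hS : S ⊆ stdCycleVertexSet (n + 1)) (hfree : AntipodalFree S) :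
    #S = #(signChanges (∑ q ∈ S, q)) := by
  have h : twistedDiff (∑ q ∈ S, q) = 2 • signedCoeff S :=
    sum_smul_stdCycleVertex_eq_iff.1 (sum_eq_sum_signedCoeff_smul hS).symm
  simp [card_eq_card_signedCoeff_ne_zero hS hfree, signChanges, h]

lemma exists_twistedDiff_eq_two_smul {T : Fin (n + 1) → ℤ} (hT : ∀ i, T i = 1 ∨ T i = -1) :
    ∃ ε : Fin (n + 1) → ℤ, (∀ k, ε k = 0 ∨ ε k = 1 ∨ ε k = -1) ∧ twistedDiff T = 2 • ε := by
  have hval (k : Fin (n + 1)) :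
      twistedDiff T k = -2 ∨ twistedDiff T k = 0 ∨ twistedDiff T k = 2 := by
    induction k using Fin.cases with
    | zero => rcases hT 0 with h | h <;> rcases hT (Fin.last n) with h' | h' <;>
        simp [twistedDiff, h, h']
    | succ i => rcases hT i.succ with h | h <;> rcases hT i.castSucc with h' | h' <;>
        simp [twistedDiff, h, h']
  refine ⟨fun k => twistedDiff T k / 2, fun k => ?_, funext fun k => ?_⟩ <;>
    simp only [Pi.smul_apply, two_nsmul] <;> have := hval k <;> omega

theorem exists_minimal_subset_sum_eq_iff {T : Fin (n + 1) → ℤ} (hT : ∀ i, T i = 1 ∨ T i = -1)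
    (j : ℕ) :
    (∃ S ⊆ stdCycleVertexSet (n + 1), #S = j ∧ ∑ q ∈ S, q = T ∧
        ∀ S' ⊆ stdCycleVertexSet (n + 1), ∑ q ∈ S', q = T → ¬ S' ⊂ S) ↔
      #(signChanges T) = j := by
  constructor
  · rintro ⟨S, hS, rfl, rfl, hmin⟩
    have hfree : AntipodalFree S :=
      AntipodalFree.of_minimal fun S' hS' hsum => hmin S' (hS'.subset.trans hS) hsum hS'
    exact (card_eq_card_signChanges_sum hS hfree).symm
  · rintro rfl
    obtain ⟨ε, hε, hTε⟩ := exists_twistedDiff_eq_two_smul hT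
    obtain ⟨S, hS, hfree, rfl⟩ := exists_signedCoeff_eq hε
    have hsum : ∑ q ∈ S, q = T :=
      (sum_eq_sum_signedCoeff_smul hS).trans (sum_smul_stdCycleVertex_eq_iff.2 hTε)
    refine ⟨S, hS, hsum ▸ card_eq_card_signChanges_sum hS hfree, hsum, fun S' hS' hsum' hlt => ?_⟩
    have hcard := card_eq_card_signChanges_sum hS' (hfree.mono hlt.subset)
    rw [hsum', ← hsum, ← card_eq_card_signChanges_sum hS hfree] at hcard
    exact (card_lt_card hlt).ne hcard

end MinimalRepresentations

section SignVectors

variable {n : ℕ}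

def signVector (c : ℤ) (A : Finset (Fin (n + 1))) (i : Fin (n + 1)) : ℤ :=
  c * (-1) ^ #{k ∈ A | k ≠ 0 ∧ k ≤ i}

lemma signVector_zero (c : ℤ) (A : Finset (Fin (n + 1))) : signVector c A 0 = c := by
  simp [signVector]

lemma signVector_succ (c : ℤ) (A : Finset (Fin (n + 1))) (i : Fin n) :
    signVector c A i.succ = (if i.succ ∈ A then -1 else 1) * signVector c A i.castSucc := by
  have hsplit : {k ∈ A | k ≠ 0 ∧ k ≤ i.succ} =
      {k ∈ A | k ≠ 0 ∧ k ≤ i.castSucc} ∪ {k ∈ A | k = i.succ} := by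
    ext k
    simp only [mem_union, mem_filter, Fin.le_castSucc_iff]
    rw [le_iff_lt_or_eq]
    rcases eq_or_ne k i.succ with rfl | hk
    · simp [Fin.succ_ne_zero]
    · simp [hk]
  have hdisj : Disjoint {k ∈ A | k ≠ 0 ∧ k ≤ i.castSucc} {k ∈ A | k = i.succ} := by
    simp only [disjoint_filter]
    rintro k - ⟨-, hk⟩ rfl
    exact absurd hk (by simp [Fin.le_def])
  rw [signVector, signVector, hsplit, card_union_of_disjoint hdisj, filter_eq', pow_add]
  split_ifs <;> simp

lemma signVector_last (c : ℤ) (A : Finset (Fin (n + 1))) :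
    signVector c A (Fin.last n) = c * (-1) ^ #(A.erase 0) := by
  simp [signVector, Fin.le_last, filter_ne']

lemma signVector_eq_one_or_eq_neg_one {c : ℤ} (hc : c = 1 ∨ c = -1) (A : Finset (Fin (n + 1)))
    (i : Fin (n + 1)) : signVector c A i = 1 ∨ signVector c A i = -1 := by
  rcases hc with rfl | rfl <;> rcases neg_one_pow_eq_or ℤ #{k ∈ A | k ≠ 0 ∧ k ≤ i} with h | h <;>
    simp [signVector, h]

lemma signChanges_signVector {c : ℤ} (hc : c = 1 ∨ c = -1) {A : Finset (Fin (n + 1))}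
    (hA : Odd #A) : signChanges (signVector c A) = A := by
  ext k
  induction k using Fin.cases with
  | zero =>
    rw [zero_mem_signChanges, signVector_zero, signVector_last]
    by_cases h0 : 0 ∈ A
    · rw [card_erase_of_mem h0, (Nat.Odd.sub_odd hA odd_one).neg_one_pow]
      rcases hc with rfl | rfl <;> simp [h0]
    · rw [erase_eq_of_notMem h0, hA.neg_one_pow]
      simp [h0]
  | succ i =>
    rw [succ_mem_signChanges, signVector_succ]
    rcases signVector_eq_one_or_eq_neg_one hc A i.castSucc with h | h <;> split_ifs <;>
      simp [*]

lemma signVector_signChanges {T : Fin (n + 1) → ℤ} (hT : ∀ i, T i = 1 ∨ T i = -1) :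
    signVector (T 0) (signChanges T) = T := by
  funext i
  induction i using Fin.induction with
  | zero => exact signVector_zero _ _
  | succ i ih =>
    rw [signVector_succ, ih]
    rcases hT i.succ with h | h <;> rcases hT i.castSucc with h' | h' <;>
      simp [succ_mem_signChanges, h, h']

theorem card_setOf_card_signChanges_eq {j : ℕ} (hj : Odd j) :
    Nat.card {T : Fin (n + 1) → ℤ | (∀ i, T i = 1 ∨ T i = -1) ∧ #(signChanges T) = j} =
      2 * (n + 1).choose j := by
  set P : Finset (ℤ × Finset (Fin (n + 1))) := {1, -1} ×ˢ powersetCard j univ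
  have hP {c : ℤ} {A : Finset (Fin (n + 1))} : (c, A) ∈ P ↔ (c = 1 ∨ c = -1) ∧ #A = j := by
    simp [P]
  have himage : {T : Fin (n + 1) → ℤ | (∀ i, T i = 1 ∨ T i = -1) ∧ #(signChanges T) = j} =
      (fun p : ℤ × Finset (Fin (n + 1)) => signVector p.1 p.2) '' P := by
    ext T
    simp only [Set.mem_ofPred_eq, Set.mem_image, mem_coe, Prod.exists, hP]
    constructor
    · rintro ⟨hT, hj⟩
      exact ⟨T 0, signChanges T, ⟨hT 0, hj⟩, signVector_signChanges hT⟩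
    · rintro ⟨c, A, ⟨hc, rfl⟩, rfl⟩
      exact ⟨signVector_eq_one_or_eq_neg_one hc A, by rw [signChanges_signVector hc hj]⟩
  have hinj : Set.InjOn (fun p : ℤ × Finset (Fin (n + 1)) => signVector p.1 p.2) P := by
    rintro ⟨c, A⟩ hcA ⟨c', A'⟩ hcA' h
    obtain ⟨hc, rfl⟩ := hP.1 hcA
    obtain ⟨hc', hA'⟩ := hP.1 hcA'
    simp only at h
    rw [Prod.mk.injEq, ← signVector_zero c A, ← signVector_zero c' A', h,
      ← signChanges_signVector hc hj, ← signChanges_signVector hc' (A := A') (hA' ▸ hj), h]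
    exact ⟨rfl, rfl⟩
  rw [himage, Nat.card_coe_set_eq, hinj.ncard_image, Set.ncard_coe_finset, card_product,
    card_powersetCard, card_univ, Fintype.card_fin]
  rfl

end SignVectors

theorem stmt_11_general (t : ℕ) (ht : 3 ≤ t) (j : ℕ) (hjodd : Odd j) :
    Nat.card {T : Fin t → ℤ |
      (∀ i, T i = 1 ∨ T i = -1) ∧
      ∃ S : Finset (Fin t → ℤ), S ⊆ stdCycleVertexSet t ∧ S.card = j ∧
        (∑ q ∈ S, q) = T ∧
        ∀ S' ⊆ stdCycleVertexSet t, (∑ q ∈ S', q) = T → ¬ S' ⊂ S}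
      = 2 * Nat.choose t j := by
  obtain ⟨n, rfl⟩ : ∃ n, t = n + 1 := ⟨t - 1, by omega⟩
  rw [← card_setOf_card_signChanges_eq hjodd]
  congr 2
  ext T
  exact and_congr_right fun hT => exists_minimal_subset_sum_eq_iff hT j

theorem stmt_11 (t : ℕ) (ht : 3 ≤ t) (j : ℕ) (hj1 : 1 ≤ j) (hj2 : j ≤ t) (hjodd : Odd j) :
    Nat.card {T : Fin t → ℤ |
      (∀ i, T i = 1 ∨ T i = -1) ∧
      ∃ S : Finset (Fin t → ℤ), S ⊆ stdCycleVertexSet t ∧ S.card = j ∧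
        (∑ q ∈ S, q) = T ∧
        ∀ S' ⊆ stdCycleVertexSet t, (∑ q ∈ S', q) = T → ¬ S' ⊂ S}
      = 2 * Nat.choose t j :=
  stmt_11_general t ht j hjodd
end
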